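/- arXiv:1610.03880 — 2 statements merged into one kernel-verified Lean document; each statement's English description precedes it below -/
import Mathlib

section
/- Let H be an ordered hypersemigroup, C a right ideal of H, and D any nonempty subset of H. Then B = (C*D] is a bi-ideal of H, i.e. B*H*B ⊆ B and (B] = B. -/
variable {H : Type*}

/-- Subset product induced by a hyperoperation. -/
def hprod (m : H → H → Set H) (A B : Set H) : Set H :=
  ⋃ a ∈ A, ⋃ b ∈ B, m a b

/-- Downward closure (X]. -/
def dcl [LE H] (X : Set H) : Set H := {t | ∃ x ∈ X, t ≤ x}

/-- Right ideal of an ordered hypergroupoid. -/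
def IsRightIdeal [LE H] (m : H → H → Set H) (A : Set H) : Prop :=
  A.Nonempty ∧ hprod m A Set.univ ⊆ A ∧ dcl A = A

/-- Left ideal of an ordered hypergroupoid. -/
def IsLeftIdeal [LE H] (m : H → H → Set H) (A : Set H) : Prop :=
  A.Nonempty ∧ hprod m Set.univ A ⊆ A ∧ dcl A = A

/-- (Two-sided) ideal of an ordered hypergroupoid. -/
def IsIdeal [LE H] (m : H → H → Set H) (A : Set H) : Prop :=
  A.Nonempty ∧ hprod m A Set.univ ⊆ A ∧ hprod m Set.univ A ⊆ A ∧ dcl A = A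

lemma mem_hprod {m : H → H → Set H} {A B : Set H} {x : H} :
    x ∈ hprod m A B ↔ ∃ a ∈ A, ∃ b ∈ B, x ∈ m a b := by
  simp [hprod]

theorem stmt5 [PartialOrder H] (m : H → H → Set H)
    (hne : ∀ a b : H, (m a b).Nonempty)
    (hcomp : ∀ a b c : H, a ≤ b →
      dcl (m a c) ⊆ dcl (m b c) ∧ dcl (m c a) ⊆ dcl (m c b))
    (hassoc : ∀ A B C : Set H,
      hprod m (hprod m A B) C = hprod m A (hprod m B C))
    (C D : Set H) (hC : IsRightIdeal m C) (hD : D.Nonempty) :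
    hprod m (hprod m (dcl (hprod m C D)) Set.univ) (dcl (hprod m C D)) ⊆
      dcl (hprod m C D) ∧
    dcl (dcl (hprod m C D)) = dcl (hprod m C D) := by
  obtain ⟨hCne, hCr, hCd⟩ := hC
  constructor
  · intro t ht
    rw [mem_hprod] at ht
    obtain ⟨p, hp, b, hb, htm⟩ := ht
    rw [mem_hprod] at hp
    obtain ⟨b', ⟨w', hw', hb'w'⟩, h, -, hpm⟩ := hp
    obtain ⟨w, hw, hbw⟩ := hb
    rw [mem_hprod] at hw
    obtain ⟨c, hc, d, hd, hwm⟩ := hw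
    rw [mem_hprod] at hw'
    obtain ⟨c', hc', d', hd', hw'm⟩ := hw'
    -- w' ∈ C since w' ∈ m c' d' ⊆ C * univ ⊆ C
    have hw'C : w' ∈ C := hCr (mem_hprod.2 ⟨c', hc', d', trivial, hw'm⟩)
    -- p ≤ q', q' ∈ m w' h
    obtain ⟨q', hq'm, hpq'⟩ := (hcomp b' w' h hb'w').1 ⟨p, hpm, le_refl p⟩
    have hq'C : q' ∈ C := hCr (mem_hprod.2 ⟨w', hw'C, h, trivial, hq'm⟩)
    -- t ≤ r1, r1 ∈ m p w (from b ≤ w)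
    obtain ⟨r1, hr1m, htr1⟩ := (hcomp b w p hbw).2 ⟨t, htm, le_refl t⟩
    -- t ≤ r2, r2 ∈ m q' w (from p ≤ q')
    obtain ⟨r2, hr2m, hr2le⟩ := (hcomp p q' w hpq').1 ⟨r1, hr1m, le_refl r1⟩
    have htr2 : t ≤ r2 := le_trans htr1 hr2le
    -- r2 ∈ {q'} * ({c} * {d}) = ({q'} * {c}) * {d}
    have : r2 ∈ hprod m {q'} (hprod m {c} {d}) :=
      mem_hprod.2 ⟨q', rfl, w, mem_hprod.2 ⟨c, rfl, d, rfl, hwm⟩, hr2m⟩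
    rw [← hassoc] at this
    rw [mem_hprod] at this
    obtain ⟨g, hg, d₀, hd₀, hr2m'⟩ := this
    rw [mem_hprod] at hg
    obtain ⟨q₀, hq₀, c₀, hc₀, hgm⟩ := hg
    rw [Set.mem_singleton_iff] at hq₀ hc₀ hd₀
    rw [hq₀, hc₀] at hgm
    rw [hd₀] at hr2m'
    have hgC : g ∈ C := hCr (mem_hprod.2 ⟨q', hq'C, c, trivial, hgm⟩)
    exact ⟨r2, mem_hprod.2 ⟨g, hgC, d, hd, hr2m'⟩, htr2⟩
  · apply Set.Subset.antisymm
    · rintro t ⟨x, ⟨y, hy, hxy⟩, htx⟩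
      exact ⟨y, hy, le_trans htx hxy⟩
    · intro t ht
      exact ⟨t, ht, le_refl t⟩
end

section
/- Let H be a regular ordered hypersemigroup. A nonempty subset B of H is a bi-ideal of H if and only if there exist a right ideal C and a left ideal D of H such that B = (C*D]. -/
variable {H : Type*}

lemma hprod_mono (m : H → H → Set H) {A A' B B' : Set H} (hA : A ⊆ A') (hB : B ⊆ B') :
    hprod m A B ⊆ hprod m A' B' := by
  intro x hx
  simp only [hprod, Set.mem_iUnion] at hx ⊢
  obtain ⟨a, ha, b, hb, hx⟩ := hx
  exact ⟨a, hA ha, b, hB hb, hx⟩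

lemma subset_hprod (m : H → H → Set H) {A B : Set H} {a b : H} (ha : a ∈ A) (hb : b ∈ B) :
    m a b ⊆ hprod m A B := by
  intro x hx
  simp only [hprod, Set.mem_iUnion]
  exact ⟨a, ha, b, hb, hx⟩

lemma hprod_nonempty (m : H → H → Set H) (hne : ∀ a b : H, (m a b).Nonempty)
    {A B : Set H} (hA : A.Nonempty) (hB : B.Nonempty) : (hprod m A B).Nonempty := by
  obtain ⟨a, ha⟩ := hA
  obtain ⟨b, hb⟩ := hB
  obtain ⟨x, hx⟩ := hne a b
  exact ⟨x, subset_hprod m ha hb hx⟩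

lemma dcl_mono [LE H] {X Y : Set H} (h : X ⊆ Y) : dcl X ⊆ dcl Y := by
  rintro t ⟨x, hx, ht⟩; exact ⟨x, h hx, ht⟩

lemma subset_dcl [Preorder H] (X : Set H) : X ⊆ dcl X :=
  fun x hx => ⟨x, hx, le_refl x⟩

lemma dcl_dcl [Preorder H] (X : Set H) : dcl (dcl X) = dcl X := by
  apply Set.Subset.antisymm
  · rintro t ⟨y, ⟨x, hx, hy⟩, ht⟩; exact ⟨x, hx, le_trans ht hy⟩
  · exact subset_dcl _

lemma hprod_dcl_subset [PartialOrder H] (m : H → H → Set H)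
    (hcomp : ∀ a b c : H, a ≤ b →
      dcl (m a c) ⊆ dcl (m b c) ∧ dcl (m c a) ⊆ dcl (m c b))
    (A B : Set H) : hprod m (dcl A) (dcl B) ⊆ dcl (hprod m A B) := by
  intro x hx
  simp only [hprod, Set.mem_iUnion] at hx
  obtain ⟨a', ⟨a, ha, ha'⟩, b', ⟨b, hb, hb'⟩, hx⟩ := hx
  have h1 : x ∈ dcl (m a' b') := subset_dcl _ hx
  have h2 : x ∈ dcl (m a b') := (hcomp a' a b' ha').1 h1
  have h3 : x ∈ dcl (m a b) := (hcomp b' b a hb').2 h2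
  obtain ⟨y, hy, hxy⟩ := h3
  exact ⟨y, subset_hprod m ha hb hy, hxy⟩

theorem stmt6 [PartialOrder H] (m : H → H → Set H)
    (hne : ∀ a b : H, (m a b).Nonempty)
    (hcomp : ∀ a b c : H, a ≤ b →
      dcl (m a c) ⊆ dcl (m b c) ∧ dcl (m c a) ⊆ dcl (m c b))
    (hassoc : ∀ A B C : Set H,
      hprod m (hprod m A B) C = hprod m A (hprod m B C))
    (hreg : ∀ A : Set H, A.Nonempty → A ⊆ dcl (hprod m (hprod m A Set.univ) A))
    (B : Set H) (hBne : B.Nonempty) :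
    (hprod m (hprod m B Set.univ) B ⊆ B ∧ dcl B = B) ↔
    (∃ C D : Set H, IsRightIdeal m C ∧ IsLeftIdeal m D ∧ B = dcl (hprod m C D)) := by
  -- a helper: product of downward closures sits in the closure of the product,
  -- even when one side is not presented as a closure.
  have hpd := hprod_dcl_subset m hcomp
  have hstep : ∀ X Y : Set H, hprod m (dcl X) Y ⊆ dcl (hprod m X Y) := by
    intro X Y
    exact (hprod_mono m (le_refl _) (subset_dcl Y)).trans (hpd X Y)
  have hstep' : ∀ X Y : Set H, hprod m X (dcl Y) ⊆ dcl (hprod m X Y) := by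
    intro X Y
    exact (hprod_mono m (subset_dcl X) (le_refl _)).trans (hpd X Y)
  constructor
  · rintro ⟨hbi, hdcl⟩
    refine ⟨dcl (hprod m B Set.univ), dcl (hprod m Set.univ B), ?_, ?_, ?_⟩
    · refine ⟨(hprod_nonempty m hne hBne ⟨hBne.choose, Set.mem_univ _⟩).mono (subset_dcl _), ?_, dcl_dcl _⟩
      calc hprod m (dcl (hprod m B Set.univ)) Set.univ
          ⊆ dcl (hprod m (hprod m B Set.univ) Set.univ) := hstep _ _
        _ = dcl (hprod m B (hprod m Set.univ Set.univ)) := by rw [hassoc]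
        _ ⊆ dcl (hprod m B Set.univ) :=
            dcl_mono (hprod_mono m (le_refl _) (Set.subset_univ _))
    · refine ⟨(hprod_nonempty m hne ⟨hBne.choose, Set.mem_univ _⟩ hBne).mono (subset_dcl _), ?_, dcl_dcl _⟩
      calc hprod m Set.univ (dcl (hprod m Set.univ B))
          ⊆ dcl (hprod m Set.univ (hprod m Set.univ B)) := hstep' _ _
        _ = dcl (hprod m (hprod m Set.univ Set.univ) B) := by rw [hassoc]
        _ ⊆ dcl (hprod m Set.univ B) :=
            dcl_mono (hprod_mono m (Set.subset_univ _) (le_refl _))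
    · -- B = dcl (C * D)
      apply Set.Subset.antisymm
      · -- B ⊆ dcl (C*D)
        have hBD : B ⊆ dcl (hprod m Set.univ B) := by
          refine (hreg B hBne).trans (dcl_mono ?_)
          exact hprod_mono m (Set.subset_univ _) (le_refl _)
        refine (hreg B hBne).trans ?_
        exact dcl_mono (hprod_mono m (subset_dcl _) hBD)
      · -- dcl (C*D) ⊆ B
        have key : hprod m (dcl (hprod m B Set.univ)) (dcl (hprod m Set.univ B))
            ⊆ dcl (hprod m (hprod m B Set.univ) (hprod m Set.univ B)) := hpd _ _
        have key2 : hprod m (hprod m B Set.univ) (hprod m Set.univ B) ⊆ B := by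
          have e1 : hprod m (hprod m B Set.univ) (hprod m Set.univ B)
              = hprod m B (hprod m Set.univ (hprod m Set.univ B)) := hassoc _ _ _
          have e2 : hprod m Set.univ (hprod m Set.univ B)
              = hprod m (hprod m Set.univ Set.univ) B := (hassoc _ _ _).symm
          rw [e1, e2]
          have : hprod m B (hprod m (hprod m Set.univ Set.univ) B)
              ⊆ hprod m B (hprod m Set.univ B) :=
            hprod_mono m (le_refl _) (hprod_mono m (Set.subset_univ _) (le_refl _))
          refine this.trans ?_
          rw [← hassoc]
          exact hbi
        calc dcl (hprod m (dcl (hprod m B Set.univ)) (dcl (hprod m Set.univ B)))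
            ⊆ dcl (dcl (hprod m (hprod m B Set.univ) (hprod m Set.univ B))) := dcl_mono key
          _ = dcl (hprod m (hprod m B Set.univ) (hprod m Set.univ B)) := dcl_dcl _
          _ ⊆ dcl B := dcl_mono key2
          _ = B := hdcl
  · rintro ⟨C, D, ⟨hCne, hCr, hCd⟩, ⟨hDne, hDl, hDd⟩, rfl⟩
    refine ⟨?_, dcl_dcl _⟩
    have key : hprod m (hprod m C D) (hprod m C D) ⊆ hprod m C D := by
      calc hprod m (hprod m C D) (hprod m C D)
          ⊆ hprod m (hprod m C D) (hprod m Set.univ D) :=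
            hprod_mono m (le_refl _) (hprod_mono m (Set.subset_univ _) (le_refl _))
        _ ⊆ hprod m (hprod m C D) D :=
            hprod_mono m (le_refl _) hDl
        _ = hprod m C (hprod m D D) := hassoc _ _ _
        _ ⊆ hprod m C (hprod m Set.univ D) :=
            hprod_mono m (le_refl _) (hprod_mono m (Set.subset_univ _) (le_refl _))
        _ ⊆ hprod m C D := hprod_mono m (le_refl _) hDl
    have key2 : hprod m (hprod m (hprod m C D) Set.univ) (hprod m C D)
        ⊆ hprod m C D := by
      have h1 : hprod m (hprod m C D) Set.univ = hprod m C (hprod m D Set.univ) :=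
        hassoc _ _ _
      have h2 : hprod m C (hprod m D Set.univ) ⊆ hprod m C Set.univ :=
        hprod_mono m (le_refl _) (Set.subset_univ _)
      have h3 : hprod m (hprod m C D) Set.univ ⊆ C := by
        rw [h1]; exact h2.trans hCr
      refine (hprod_mono m h3 (le_refl _)).trans ?_
      have : hprod m C D ⊆ D := (hprod_mono m (Set.subset_univ _) (le_refl _)).trans hDl
      exact (hprod_mono m (le_refl C) this)
    calc hprod m (hprod m (dcl (hprod m C D)) Set.univ) (dcl (hprod m C D))
        ⊆ hprod m (dcl (hprod m (hprod m C D) Set.univ)) (dcl (hprod m C D)) :=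
          hprod_mono m (hstep _ _) (le_refl _)
      _ ⊆ dcl (hprod m (hprod m (hprod m C D) Set.univ) (hprod m C D)) := hpd _ _
      _ ⊆ dcl (hprod m C D) := dcl_mono key2
end
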